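/- arXiv:2504.15505 — 4 statements merged into one kernel-verified Lean document; each statement's English description precedes it below -/
import Mathlib

section
/- Let p > 3 be prime and fix a, b ∈ F_p with a² ≠ 3b. Define S_λ = Σ_{x ∈ F_p} σ(x³ + a x² + b x + λ) for λ ∈ F_p. Then Σ_λ S_λ = 0 and (1/p)·Σ_λ S_λ² = p − 1 − σ(−3) − σ(a² − 3b). -/
/-! Expanding the square and summing over `λ` first leaves the sums `∑ λ, σ((u + λ)(v + λ))`,
which are `p - 1` for `u = v` and `-1` otherwise (a Jacobi sum), so `∑ λ, S_λ² = p N - p²` where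
`N` counts the pairs with `f x = f y` for `f x = x³ + a x² + b x`. As
`f x - f y = (x - y) Q(x, y)` with `Q` quadratic in `y`, `N` is counted fibre by fibre through
the root count `1 + σ(disc)` of quadratics: the diagonal gives `p`, the conic `Q = 0` gives
`p - σ(-3)` because `∑ x, σ(A x² + B x + C) = -σ(A)` for a nonzero discriminant, and the
diagonal points on the conic, the roots of `f'`, number `1 + σ(a² - 3b)`. -/

open Finset

section CharacterSums

variable {F : Type*} [Field F] [Fintype F] [DecidableEq F]

theorem quadraticChar_sum_add_left (hF : ringChar F ≠ 2) (c : F) :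
    ∑ x : F, quadraticChar F (c + x) = 0 :=
  (Equiv.sum_comp (Equiv.addLeft c) (quadraticChar F)).trans (quadraticChar_sum_zero hF)

theorem quadraticChar_sum_mul_add (hF : ringChar F ≠ 2) (c : F) :
    ∑ t : F, quadraticChar F (t * (t + c)) =
      if c = 0 then (Fintype.card F : ℤ) - 1 else -1 := by
  split_ifs with hc
  · have hsq : ∀ t : F, quadraticChar F (t * (t + c)) = 1 - if t = 0 then 1 else 0 := by
      intro t
      split_ifs with ht
      · simp [ht]
      · rw [hc, add_zero, ← sq, quadraticChar_sq_one' ht, sub_zero]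
    simp [hsq, sum_sub_distrib]
  · -- substituting `t = -c * x` turns the sum into `χ(-1)` times the Jacobi sum `J(χ, χ)`
    have hJ := jacobiSum_nontrivial_inv (quadraticChar_ne_one hF)
    rw [(quadraticChar_isQuadratic F).inv, jacobiSum] at hJ
    have hsub : ∀ x : F, quadraticChar F (-c * x * (-c * x + c)) =
        quadraticChar F (-1) * (quadraticChar F x * quadraticChar F (1 - x)) := by
      intro x
      rw [show -c * x * (-c * x + c) = -1 * c ^ 2 * (x * (1 - x)) by ring, map_mul, map_mul,
        map_mul, quadraticChar_sq_one' hc, mul_one]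
    rw [← Equiv.sum_comp (Equiv.mulLeft₀ (-c) (neg_ne_zero.2 hc))]
    simp only [Equiv.mulLeft₀_apply, hsub, ← mul_sum, hJ, mul_neg, ← sq,
      quadraticChar_sq_one (neg_ne_zero.2 (one_ne_zero (α := F)))]

theorem quadraticChar_sum_add_mul_add (hF : ringChar F ≠ 2) (u v : F) :
    ∑ l : F, quadraticChar F ((u + l) * (v + l)) =
      if u = v then (Fintype.card F : ℤ) - 1 else -1 := by
  calc ∑ l : F, quadraticChar F ((u + l) * (v + l))
      = ∑ l : F, quadraticChar F ((u + l) * (u + l + (v - u))) :=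
        sum_congr rfl fun l _ => by ring_nf
    _ = ∑ t : F, quadraticChar F (t * (t + (v - u))) :=
        Equiv.sum_comp (Equiv.addLeft u) fun t => quadraticChar F (t * (t + (v - u)))
    _ = _ := by simp only [quadraticChar_sum_mul_add hF, sub_eq_zero, eq_comm]

theorem quadraticChar_sum_sq_sub (hF : ringChar F ≠ 2) {d : F} (hd : d ≠ 0) :
    ∑ z : F, quadraticChar F (z ^ 2 - d) = -1 := by
  have hfiber : ∑ z : F, quadraticChar F (z ^ 2 - d) =
      ∑ t : F, (quadraticChar F t + 1) * quadraticChar F (t - d) := by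
    rw [← sum_fiberwise univ (· ^ 2)]
    refine sum_congr rfl fun t _ => ?_
    rw [sum_congr rfl fun z hz => by rw [(mem_filter.1 hz).2], sum_const, nsmul_eq_mul,
      ← quadraticChar_card_sqrts hF, Set.toFinset_ofPred]
  calc ∑ z : F, quadraticChar F (z ^ 2 - d)
      = ∑ t : F, quadraticChar F (t * (t + -d)) + ∑ t : F, quadraticChar F (-d + t) := by
        rw [hfiber, ← sum_add_distrib]
        refine sum_congr rfl fun t _ => ?_
        rw [← sub_eq_add_neg, neg_add_eq_sub, map_mul]
        ring
    _ = -1 := by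
        rw [quadraticChar_sum_mul_add hF, if_neg (neg_ne_zero.2 hd),
          quadraticChar_sum_add_left hF, add_zero]

theorem card_quadratic_roots (hF : ringChar F ≠ 2) {A : F} (hA : A ≠ 0) (B C : F) :
    (#{x | A * x ^ 2 + B * x + C = 0} : ℤ) = quadraticChar F (B ^ 2 - 4 * A * C) + 1 := by
  have h2 : (2 : F) ≠ 0 := Ring.two_ne_zero hF
  have h4A : 4 * A ≠ 0 := by
    rw [show (4 : F) * A = 2 * 2 * A by norm_num]
    exact mul_ne_zero (mul_ne_zero h2 h2) hA
  rw [← quadraticChar_card_sqrts hF, Set.toFinset_ofPred, Nat.cast_inj]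
  refine card_equiv ((Equiv.mulLeft₀ (2 * A) (mul_ne_zero h2 hA)).trans
    (Equiv.addRight B)) fun x => ?_
  simp only [mem_filter, mem_univ, true_and, Equiv.trans_apply, Equiv.mulLeft₀_apply,
    Equiv.coe_addRight]
  rw [← sub_eq_zero (a := (2 * A * x + B) ^ 2),
    show (2 * A * x + B) ^ 2 - (B ^ 2 - 4 * A * C) = 4 * A * (A * x ^ 2 + B * x + C) by ring,
    mul_eq_zero, or_iff_right h4A]

theorem quadraticChar_sum_quadratic (hF : ringChar F ≠ 2) {A B C : F} (hA : A ≠ 0)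
    (hD : B ^ 2 - 4 * A * C ≠ 0) :
    ∑ x : F, quadraticChar F (A * x ^ 2 + B * x + C) = -quadraticChar F A := by
  have h2 : (2 : F) ≠ 0 := Ring.two_ne_zero hF
  have hχ4A : quadraticChar F (4 * A) = quadraticChar F A := by
    rw [map_mul, show (4 : F) = 2 ^ 2 by norm_num, quadraticChar_sq_one' h2, one_mul]
  have hscaled : quadraticChar F A * ∑ x : F, quadraticChar F (A * x ^ 2 + B * x + C) = -1 := by
    have hsquare : ∀ x : F, 4 * A * (A * x ^ 2 + B * x + C) =
        (2 * A * x + B) ^ 2 - (B ^ 2 - 4 * A * C) := fun x => by ring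
    rw [← hχ4A, mul_sum]
    simp only [← map_mul, hsquare]
    exact (Equiv.sum_comp ((Equiv.mulLeft₀ (2 * A) (mul_ne_zero h2 hA)).trans
      (Equiv.addRight B)) fun z => quadraticChar F (z ^ 2 - (B ^ 2 - 4 * A * C))).trans
      (quadraticChar_sum_sq_sub hF hD)
  calc ∑ x : F, quadraticChar F (A * x ^ 2 + B * x + C)
      = quadraticChar F A ^ 2 * ∑ x : F, quadraticChar F (A * x ^ 2 + B * x + C) := by
        rw [quadraticChar_sq_one hA, one_mul]
    _ = -quadraticChar F A := by rw [sq, mul_assoc, hscaled, mul_neg_one]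

variable {ι : Type*} [Fintype ι]

theorem sum_sum_quadraticChar_add (hF : ringChar F ≠ 2) (f : ι → F) :
    ∑ l : F, ∑ i, quadraticChar F (f i + l) = 0 := by
  rw [sum_comm]
  exact sum_eq_zero fun i _ => quadraticChar_sum_add_left hF (f i)

theorem sum_sq_sum_quadraticChar_add (hF : ringChar F ≠ 2) (f : ι → F) :
    ∑ l : F, (∑ i, quadraticChar F (f i + l)) ^ 2 =
      Fintype.card F * ∑ i, (#{j | f i = f j} : ℤ) - Fintype.card ι ^ 2 := by
  calc ∑ l : F, (∑ i, quadraticChar F (f i + l)) ^ 2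
      = ∑ i, ∑ j, ∑ l : F, quadraticChar F ((f i + l) * (f j + l)) := by
        simp only [sq, sum_mul_sum, map_mul]
        rw [sum_comm]
        exact sum_congr rfl fun i _ => sum_comm
    _ = ∑ i, ∑ j, ((Fintype.card F : ℤ) * (if f i = f j then 1 else 0) - 1) := by
        simp only [quadraticChar_sum_add_mul_add hF]
        refine sum_congr rfl fun i _ => sum_congr rfl fun j _ => ?_
        split_ifs <;> ring
    _ = _ := by
        simp only [sum_sub_distrib, ← mul_sum, sum_boole, sum_const, card_univ]
        ring

theorem card_cubic_fiber (a b x : F) :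
    (#{y | x ^ 3 + a * x ^ 2 + b * x = y ^ 3 + a * y ^ 2 + b * y} : ℤ) =
      #{y | y ^ 2 + (x + a) * y + (x ^ 2 + a * x + b) = 0} + 1 -
        if 3 * x ^ 2 + 2 * a * x + b = 0 then 1 else 0 := by
  have hfiber : univ.filter (fun y => x ^ 3 + a * x ^ 2 + b * x = y ^ 3 + a * y ^ 2 + b * y) =
      insert x (univ.filter fun y => y ^ 2 + (x + a) * y + (x ^ 2 + a * x + b) = 0) := by
    ext y
    simp only [mem_filter, mem_univ, true_and, mem_insert]
    rw [← sub_eq_zero,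
      show x ^ 3 + a * x ^ 2 + b * x - (y ^ 3 + a * y ^ 2 + b * y) =
        (x - y) * (y ^ 2 + (x + a) * y + (x ^ 2 + a * x + b)) by ring,
      mul_eq_zero, sub_eq_zero, eq_comm]
  have hdiag : x ^ 2 + (x + a) * x + (x ^ 2 + a * x + b) = 3 * x ^ 2 + 2 * a * x + b := by ring
  rw [hfiber, card_insert_eq_ite]
  simp only [mem_filter, mem_univ, true_and, hdiag]
  split_ifs <;> push_cast <;> ring

theorem sum_card_cubic_fiber (hF : ringChar F ≠ 2) (h3 : (3 : F) ≠ 0) {a b : F}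
    (hab : a ^ 2 ≠ 3 * b) :
    ∑ x : F, (#{y | x ^ 3 + a * x ^ 2 + b * x = y ^ 3 + a * y ^ 2 + b * y} : ℤ) =
      2 * Fintype.card F - 1 - quadraticChar F (-3) - quadraticChar F (a ^ 2 - 3 * b) := by
  have h2 : (2 : F) ≠ 0 := Ring.two_ne_zero hF
  have hroots : ∀ x : F, (#{y | y ^ 2 + (x + a) * y + (x ^ 2 + a * x + b) = 0} : ℤ) =
      quadraticChar F (-3 * x ^ 2 + -2 * a * x + (a ^ 2 - 4 * b)) + 1 := fun x => by
    rw [show -3 * x ^ 2 + -2 * a * x + (a ^ 2 - 4 * b) = (x + a) ^ 2 - 4 * 1 * (x ^ 2 + a * x + b)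
      by ring, ← card_quadratic_roots hF one_ne_zero]
    simp only [one_mul]
  have hconic : ∑ x : F, quadraticChar F (-3 * x ^ 2 + -2 * a * x + (a ^ 2 - 4 * b)) =
      -quadraticChar F (-3) := by
    refine quadraticChar_sum_quadratic hF (neg_ne_zero.2 h3) ?_
    rw [show (-2 * a) ^ 2 - 4 * -3 * (a ^ 2 - 4 * b) = 2 ^ 4 * (a ^ 2 - 3 * b) by ring]
    exact mul_ne_zero (pow_ne_zero 4 h2) (sub_ne_zero.2 hab)
  have hdiag :
      (#{x | 3 * x ^ 2 + 2 * a * x + b = 0} : ℤ) = quadraticChar F (a ^ 2 - 3 * b) + 1 := by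
    rw [card_quadratic_roots hF h3, show (2 * a) ^ 2 - 4 * 3 * b = 2 ^ 2 * (a ^ 2 - 3 * b) by ring,
      map_mul, quadraticChar_sq_one' h2, one_mul]
  simp only [card_cubic_fiber, hroots, sum_sub_distrib, sum_add_distrib, sum_boole, hconic, hdiag]
  simp only [sum_const, card_univ, nsmul_eq_mul, mul_one]
  ring

end CharacterSums

theorem stmt3 (p : ℕ) [Fact p.Prime] (hp : 3 < p) (a b : ZMod p)
    (hab : a ^ 2 ≠ 3 * b) :
    (∑ l : ZMod p, ∑ x : ZMod p, quadraticChar (ZMod p) (x ^ 3 + a * x ^ 2 + b * x + l)) = 0 ∧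
    (((∑ l : ZMod p, (∑ x : ZMod p, quadraticChar (ZMod p) (x ^ 3 + a * x ^ 2 + b * x + l)) ^ 2 : ℤ) : ℚ) / p)
      = p - 1 - quadraticChar (ZMod p) (-3) - quadraticChar (ZMod p) (a ^ 2 - 3 * b) := by
  have hF : ringChar (ZMod p) ≠ 2 := by
    rw [ZMod.ringChar_zmod_n]
    omega
  have h3 : (3 : ZMod p) ≠ 0 := by
    rw [Ne, ← Nat.cast_ofNat, ZMod.natCast_eq_zero_iff]
    exact Nat.not_dvd_of_pos_of_lt three_pos hp
  refine ⟨sum_sum_quadraticChar_add hF _, ?_⟩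
  rw [sum_sq_sum_quadraticChar_add hF, sum_card_cubic_fiber hF h3 hab, ZMod.card]
  have hp0 : (p : ℚ) ≠ 0 := by positivity
  push_cast
  field_simp
  ring
end

section
/- Let p > 3 be prime and fix a, b ∈ F_p with a² = 3b. Define S_λ = Σ_{x ∈ F_p} σ(x³ + a x² + b x + λ). Then Σ_λ S_λ = 0 and (1/p)·Σ_λ S_λ² = (1 + σ(−3))·(p − 1). -/
open Finset

variable {p : ℕ} [Fact p.Prime]

local notation "χ" => quadraticChar (ZMod p)

lemma rc2 (hp : 3 < p) : ringChar (ZMod p) ≠ 2 := by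
  rw [ZMod.ringChar_zmod_n]; omega

lemma indsum (hp : 3 < p) :
    ∑ t : ZMod p, (if t = (0 : ZMod p) then (0:ℤ) else 1) = (p : ℤ) - 1 := by
  have h : ∀ t : ZMod p, (if t = (0:ZMod p) then (0:ℤ) else 1)
      = 1 - (if t = (0:ZMod p) then (1:ℤ) else 0) := by
    intro t; split <;> norm_num
  rw [Finset.sum_congr rfl fun t _ => h t, Finset.sum_sub_distrib, Finset.sum_const,
    Finset.sum_ite_eq' univ (0 : ZMod p) (fun _ => (1:ℤ))]
  simp [ZMod.card]

lemma sqsum (hp : 3 < p) :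
    ∑ t : ZMod p, (χ t : ℤ) ^ 2 = (p : ℤ) - 1 := by
  have h : ∀ t : ZMod p, (χ t : ℤ) ^ 2 = if t = (0:ZMod p) then (0:ℤ) else 1 := by
    intro t
    by_cases ht : t = 0
    · rw [if_pos ht, ht, quadraticChar_zero]; ring
    · rw [if_neg ht, quadraticChar_sq_one ht]
  rw [Finset.sum_congr rfl fun t _ => h t, indsum hp]

lemma L2 (hp : 3 < p) (u w : ZMod p) :
    ∑ l : ZMod p, (χ (u + l) * χ (w + l) : ℤ)
      = if u = w then (p : ℤ) - 1 else -1 := by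
  have hre : ∑ l : ZMod p, (χ (u + l) * χ (w + l) : ℤ)
      = ∑ t : ZMod p, (χ t * χ (t + (w - u)) : ℤ) := by
    refine Fintype.sum_equiv (Equiv.addLeft u)
      (fun l => (χ (u + l) * χ (w + l) : ℤ))
      (fun t => (χ t * χ (t + (w - u)) : ℤ)) fun l => ?_
    have h1 : u + l + (w - u) = w + l := by ring
    simp only [Equiv.coe_addLeft, h1]
  rw [hre]
  by_cases huw : u = w
  · simp only [huw, sub_self, add_zero, if_pos rfl, ← sq]
    exact sqsum hp
  · rw [if_neg huw]
    set c := w - u with hc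
    have hc0 : c ≠ 0 := sub_ne_zero.mpr (Ne.symm huw)
    have key : ∑ t : ZMod p, (χ t * χ (t + c) : ℤ)
        = ∑ s ∈ univ.erase (1 : ZMod p), (χ s : ℤ) := by
      rw [← Finset.sum_erase (a := (0 : ZMod p))
        (f := fun t : ZMod p => (χ t * χ (t + c) : ℤ)) univ (by simp)]
      refine Finset.sum_nbij' (fun t => 1 + c * t⁻¹) (fun s => c * (s - 1)⁻¹) ?_ ?_ ?_ ?_ ?_
      · intro t ht
        simp only [mem_erase, mem_univ, and_true] at ht ⊢
        intro h
        have h2 : c * t⁻¹ = 0 := by linear_combination h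
        rcases mul_eq_zero.mp h2 with h3 | h3
        · exact hc0 h3
        · exact ht (inv_eq_zero.mp h3)
      · intro s hs
        simp only [mem_erase, mem_univ, and_true] at hs ⊢
        intro h
        rcases mul_eq_zero.mp h with h3 | h3
        · exact hc0 h3
        · exact hs (by rw [← sub_eq_zero]; exact inv_eq_zero.mp h3)
      · intro t ht
        simp only [mem_erase, mem_univ, and_true] at ht
        show c * ((1 + c * t⁻¹) - 1)⁻¹ = t
        have h1 : (1 + c * t⁻¹) - 1 = c * t⁻¹ := by ring
        rw [h1, mul_inv, inv_inv, ← mul_assoc, mul_inv_cancel₀ hc0, one_mul]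
      · intro s hs
        simp only [mem_erase, mem_univ, and_true] at hs
        show 1 + c * (c * (s - 1)⁻¹)⁻¹ = s
        rw [mul_inv, inv_inv, ← mul_assoc, mul_inv_cancel₀ hc0, one_mul]
        ring
      · intro t ht
        simp only [mem_erase, mem_univ, and_true] at ht
        have harg : t * (t + c) = t^2 * (1 + c * t⁻¹) := by field_simp
        calc (χ t * χ (t + c) : ℤ) = χ (t * (t + c)) := (map_mul χ _ _).symm
          _ = χ (t^2) * χ (1 + c * t⁻¹) := by rw [harg, map_mul]
          _ = χ (1 + c * t⁻¹) := by rw [map_pow, quadraticChar_sq_one ht, one_mul]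
    rw [key, Finset.sum_erase_eq_sub (mem_univ _), quadraticChar_sum_zero (rc2 hp), map_one]
    norm_num


lemma rc2' (hp : 3 < p) : ringChar (ZMod p) ≠ 2 := by
  rw [ZMod.ringChar_zmod_n]; omega

lemma two_ne (hp : 3 < p) : (2 : ZMod p) ≠ 0 := by
  have := (ZMod.natCast_eq_zero_iff 2 p).not.mpr
    (by intro h; have := Nat.le_of_dvd (by norm_num) h; omega)
  exact_mod_cast this

lemma three_ne (hp : 3 < p) : (3 : ZMod p) ≠ 0 := by
  have := (ZMod.natCast_eq_zero_iff 3 p).not.mpr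
    (by intro h; have := Nat.le_of_dvd (by norm_num) h; omega)
  exact_mod_cast this

lemma L1 (hp : 3 < p) (c : ZMod p) :
    ∑ v : ZMod p, (if v ^ 2 = c then (1:ℤ) else 0) = χ c + 1 := by
  have h := quadraticChar_card_sqrts (rc2' hp) c
  rw [Finset.sum_boole]
  rw [← h]
  congr 1
  rw [Set.toFinset_setOf]

lemma sqsum2 (hp : 3 < p) :
    ∑ t : ZMod p, (χ t : ℤ) ^ 2 = (p : ℤ) - 1 := by
  have h : ∀ t : ZMod p, (χ t : ℤ) ^ 2 = if t = (0:ZMod p) then (0:ℤ) else 1 := by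
    intro t
    by_cases ht : t = 0
    · rw [if_pos ht, ht, quadraticChar_zero]; ring
    · rw [if_neg ht, quadraticChar_sq_one ht]
  have h2 : ∀ t : ZMod p, (if t = (0:ZMod p) then (0:ℤ) else 1)
      = 1 - (if t = (0:ZMod p) then (1:ℤ) else 0) := by
    intro t; split <;> norm_num
  rw [Finset.sum_congr rfl fun t _ => h t, Finset.sum_congr rfl fun t _ => h2 t,
    Finset.sum_sub_distrib, Finset.sum_const,
    Finset.sum_ite_eq' univ (0 : ZMod p) (fun _ => (1:ℤ))]
  simp [ZMod.card]

lemma Msum (hp : 3 < p) :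
    ∑ u : ZMod p, ∑ v : ZMod p, (if 3 * u ^ 2 + v ^ 2 = 0 then (1:ℤ) else 0)
      = (p : ℤ) + χ (-3) * ((p : ℤ) - 1) := by
  have h : ∀ u : ZMod p, ∑ v : ZMod p, (if 3 * u ^ 2 + v ^ 2 = 0 then (1:ℤ) else 0)
      = (χ (-3) : ℤ) * (χ u : ℤ) ^ 2 + 1 := by
    intro u
    have h1 : ∀ v : ZMod p, (3 * u ^ 2 + v ^ 2 = 0) ↔ (v ^ 2 = -3 * u ^ 2) := by
      intro v; constructor <;> intro h <;> linear_combination h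
    have h2 : ∑ v : ZMod p, (if 3 * u ^ 2 + v ^ 2 = 0 then (1:ℤ) else 0)
        = ∑ v : ZMod p, (if v ^ 2 = -3 * u ^ 2 then (1:ℤ) else 0) := by
      refine Finset.sum_congr rfl fun v _ => ?_
      simp only [h1]
    rw [h2, L1 hp]
    have : (χ (-3 * u ^ 2) : ℤ) = χ (-3) * (χ u) ^ 2 := by
      rw [map_mul, map_pow]
    rw [this]
  rw [Finset.sum_congr rfl fun u _ => h u, Finset.sum_add_distrib, Finset.sum_const,
    ← Finset.mul_sum, sqsum2 hp]
  simp [ZMod.card]; ring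

lemma Ncount (hp : 3 < p) (a b : ZMod p) (hab : a ^ 2 = 3 * b) :
    ∑ x : ZMod p, ∑ y : ZMod p,
      (if x ^ 3 + a * x ^ 2 + b * x = y ^ 3 + a * y ^ 2 + b * y then (1:ℤ) else 0)
      = 2 * (p : ℤ) - 1 + χ (-3) * ((p : ℤ) - 1) := by
  have h2 : (2 : ZMod p) ≠ 0 := two_ne hp
  have h3 : (3 : ZMod p) ≠ 0 := three_ne hp
  have h12 : (12 : ZMod p) ≠ 0 := by
    have : (12 : ZMod p) = 2 * 2 * 3 := by norm_num
    rw [this]; exact mul_ne_zero (mul_ne_zero h2 h2) h3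
  -- pointwise indicator identity
  have hind : ∀ x y : ZMod p,
      (if x ^ 3 + a * x ^ 2 + b * x = y ^ 3 + a * y ^ 2 + b * y then (1:ℤ) else 0)
      = (if x = y then (1:ℤ) else 0)
        + (if 3 * (2 * x + y + a) ^ 2 + (3 * y + a) ^ 2 = 0 then (1:ℤ) else 0)
        - (if x = y ∧ 3 * x + a = 0 then (1:ℤ) else 0) := by
    intro x y
    have iff1 : (x ^ 3 + a * x ^ 2 + b * x = y ^ 3 + a * y ^ 2 + b * y)
        ↔ (x = y ∨ 3 * (2 * x + y + a) ^ 2 + (3 * y + a) ^ 2 = 0) := by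
      constructor
      · intro h
        by_cases hxy : x = y
        · exact Or.inl hxy
        · refine Or.inr ?_
          have hQ : x ^ 2 + x * y + y ^ 2 + a * (x + y) + b = 0 := by
            have hfac : (x - y) * (x ^ 2 + x * y + y ^ 2 + a * (x + y) + b) = 0 := by
              linear_combination h
            rcases mul_eq_zero.mp hfac with h' | h'
            · exact absurd (sub_eq_zero.mp h') hxy
            · exact h'
          linear_combination 12 * hQ + 4 * hab
      · rintro (h | h)
        · rw [h]
        · have hQ : x ^ 2 + x * y + y ^ 2 + a * (x + y) + b = 0 := by
            have h12Q : (12 : ZMod p) * (x ^ 2 + x * y + y ^ 2 + a * (x + y) + b) = 0 := by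
              linear_combination h - 4 * hab
            rcases mul_eq_zero.mp h12Q with h' | h'
            · exact absurd h' h12
            · exact h'
          linear_combination (x - y) * hQ
    have iff2 : (x = y ∧ 3 * (2 * x + y + a) ^ 2 + (3 * y + a) ^ 2 = 0)
        ↔ (x = y ∧ 3 * x + a = 0) := by
      constructor
      · rintro ⟨hxy, hK⟩
        refine ⟨hxy, ?_⟩
        have hsq : (2 * (3 * x + a)) ^ 2 = 0 := by
          rw [← hxy] at hK; linear_combination hK
        have := pow_eq_zero_iff (n := 2) (by norm_num) |>.mp hsq
        rcases mul_eq_zero.mp this with h' | h'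
        · exact absurd h' h2
        · exact h'
      · rintro ⟨hxy, hx⟩
        refine ⟨hxy, ?_⟩
        rw [← hxy]
        linear_combination (12 * x + 4 * a) * hx
    by_cases hxy : x = y <;>
      by_cases hK : 3 * (2 * x + y + a) ^ 2 + (3 * y + a) ^ 2 = 0
    · have hx : 3 * x + a = 0 := (iff2.mp ⟨hxy, hK⟩).2
      rw [if_pos (iff1.mpr (Or.inl hxy)), if_pos hxy, if_pos hK, if_pos ⟨hxy, hx⟩]; ring
    · have hc : ¬(x = y ∧ 3 * x + a = 0) := fun h => hK (iff2.mpr h).2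
      rw [if_pos (iff1.mpr (Or.inl hxy)), if_pos hxy, if_neg hK, if_neg hc]; ring
    · have hc : ¬(x = y ∧ 3 * x + a = 0) := fun h => hxy h.1
      rw [if_pos (iff1.mpr (Or.inr hK)), if_neg hxy, if_pos hK, if_neg hc]; ring
    · have hc : ¬(x = y ∧ 3 * x + a = 0) := fun h => hxy h.1
      have hne : ¬(x ^ 3 + a * x ^ 2 + b * x = y ^ 3 + a * y ^ 2 + b * y) := by
        intro h; rcases iff1.mp h with h' | h' <;> [exact hxy h'; exact hK h']
      rw [if_neg hne, if_neg hxy, if_neg hK, if_neg hc]; ring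
  rw [Finset.sum_congr rfl fun x _ => Finset.sum_congr rfl fun y _ => hind x y]
  simp only [Finset.sum_sub_distrib, Finset.sum_add_distrib]
  -- sum of [x=y]
  have hA : ∑ x : ZMod p, ∑ y : ZMod p, (if x = y then (1:ℤ) else 0) = (p : ℤ) := by
    have : ∀ x : ZMod p, ∑ y : ZMod p, (if x = y then (1:ℤ) else 0) = 1 := by
      intro x; rw [Finset.sum_ite_eq univ x (fun _ => (1:ℤ))]; simp
    rw [Finset.sum_congr rfl fun x _ => this x]
    simp [ZMod.card]
  -- sum of [K = 0]
  have hB : ∑ x : ZMod p, ∑ y : ZMod p,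
      (if 3 * (2 * x + y + a) ^ 2 + (3 * y + a) ^ 2 = 0 then (1:ℤ) else 0)
      = (p : ℤ) + χ (-3) * ((p : ℤ) - 1) := by
    rw [Finset.sum_comm]
    have step1 : ∀ y : ZMod p, ∑ x : ZMod p,
        (if 3 * (2 * x + y + a) ^ 2 + (3 * y + a) ^ 2 = 0 then (1:ℤ) else 0)
        = ∑ u : ZMod p, (if 3 * u ^ 2 + (3 * y + a) ^ 2 = 0 then (1:ℤ) else 0) := by
      intro y
      refine Fintype.sum_bijective (fun x : ZMod p => 2 * x + y + a) ?_ _ _ (fun x => rfl)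
      refine Finite.injective_iff_bijective.mp fun x1 x2 h => ?_
      have : (2 : ZMod p) * x1 = 2 * x2 := by linear_combination h
      exact mul_left_cancel₀ h2 this
    rw [Finset.sum_congr rfl fun y _ => step1 y]
    have step2 : ∑ y : ZMod p, ∑ u : ZMod p,
        (if 3 * u ^ 2 + (3 * y + a) ^ 2 = 0 then (1:ℤ) else 0)
        = ∑ v : ZMod p, ∑ u : ZMod p, (if 3 * u ^ 2 + v ^ 2 = 0 then (1:ℤ) else 0) := by
      refine Fintype.sum_bijective (fun y : ZMod p => 3 * y + a) ?_ _ _ (fun y => rfl)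
      refine Finite.injective_iff_bijective.mp fun y1 y2 h => ?_
      have : (3 : ZMod p) * y1 = 3 * y2 := by linear_combination h
      exact mul_left_cancel₀ h3 this
    rw [step2, Finset.sum_comm, Msum hp]
  -- sum of diagonal indicator
  have hC : ∑ x : ZMod p, ∑ y : ZMod p,
      (if x = y ∧ 3 * x + a = 0 then (1:ℤ) else 0) = 1 := by
    have h1 : ∀ x : ZMod p, ∑ y : ZMod p, (if x = y ∧ 3 * x + a = 0 then (1:ℤ) else 0)
        = if 3 * x + a = 0 then (1:ℤ) else 0 := by
      intro x
      by_cases hx : 3 * x + a = 0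
      · simp only [hx, and_true]
        rw [Finset.sum_ite_eq univ x (fun _ => (1:ℤ))]; simp
      · simp [hx]
    rw [Finset.sum_congr rfl fun x _ => h1 x]
    have h2' : ∀ x : ZMod p, (3 * x + a = 0) ↔ (x = -(3⁻¹ * a)) := by
      intro x
      have h3' : (3 : ZMod p) * (3⁻¹ * a) = a := by
        rw [← mul_assoc, mul_inv_cancel₀ h3, one_mul]
      constructor
      · intro h
        apply mul_left_cancel₀ h3
        rw [mul_neg, h3']
        linear_combination h
      · intro h
        rw [h, mul_neg, h3']
        ring
    rw [Finset.sum_congr rfl fun x _ => by rw [if_congr (h2' x) rfl rfl]]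
    rw [Finset.sum_ite_eq' univ (-(3⁻¹ * a)) (fun _ => (1:ℤ))]; simp
  rw [hA, hB, hC]; ring


theorem stmt4 (p : ℕ) [Fact p.Prime] (hp : 3 < p) (a b : ZMod p)
    (hab : a ^ 2 = 3 * b) :
    (∑ l : ZMod p, ∑ x : ZMod p, quadraticChar (ZMod p) (x ^ 3 + a * x ^ 2 + b * x + l)) = 0 ∧
    (((∑ l : ZMod p, (∑ x : ZMod p, quadraticChar (ZMod p) (x ^ 3 + a * x ^ 2 + b * x + l)) ^ 2 : ℤ) : ℚ) / p)
      = (1 + quadraticChar (ZMod p) (-3)) * (p - 1) := by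
  constructor
  · rw [Finset.sum_comm]
    refine Finset.sum_eq_zero fun x _ => ?_
    have hre : ∑ l : ZMod p, (quadraticChar (ZMod p) (x ^ 3 + a * x ^ 2 + b * x + l) : ℤ)
        = ∑ t : ZMod p, (quadraticChar (ZMod p) t : ℤ) := by
      refine Fintype.sum_bijective (fun l : ZMod p => x ^ 3 + a * x ^ 2 + b * x + l)
        (Equiv.addLeft (x ^ 3 + a * x ^ 2 + b * x)).bijective _ _ (fun l => rfl)
    rw [hre, quadraticChar_sum_zero (rc2 hp)]
  · have hsq : ∑ l : ZMod p,
        (∑ x : ZMod p, (quadraticChar (ZMod p) (x ^ 3 + a * x ^ 2 + b * x + l) : ℤ)) ^ 2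
        = ∑ x : ZMod p, ∑ y : ZMod p, ∑ l : ZMod p,
            (quadraticChar (ZMod p) (x ^ 3 + a * x ^ 2 + b * x + l)
              * quadraticChar (ZMod p) (y ^ 3 + a * y ^ 2 + b * y + l) : ℤ) := by
      have h1 : ∀ l : ZMod p,
          (∑ x : ZMod p, (quadraticChar (ZMod p) (x ^ 3 + a * x ^ 2 + b * x + l) : ℤ)) ^ 2
          = ∑ x : ZMod p, ∑ y : ZMod p,
              (quadraticChar (ZMod p) (x ^ 3 + a * x ^ 2 + b * x + l)
                * quadraticChar (ZMod p) (y ^ 3 + a * y ^ 2 + b * y + l) : ℤ) := by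
        intro l
        rw [sq, Finset.sum_mul_sum]
      rw [Finset.sum_congr rfl fun l _ => h1 l, Finset.sum_comm]
      exact Finset.sum_congr rfl fun x _ => Finset.sum_comm
    have hL2 : ∀ x y : ZMod p, ∑ l : ZMod p,
        (quadraticChar (ZMod p) (x ^ 3 + a * x ^ 2 + b * x + l)
          * quadraticChar (ZMod p) (y ^ 3 + a * y ^ 2 + b * y + l) : ℤ)
        = if x ^ 3 + a * x ^ 2 + b * x = y ^ 3 + a * y ^ 2 + b * y then (p : ℤ) - 1 else -1 :=
      fun x y => L2 hp (x ^ 3 + a * x ^ 2 + b * x) (y ^ 3 + a * y ^ 2 + b * y)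
    have hsplit : ∀ x y : ZMod p,
        (if x ^ 3 + a * x ^ 2 + b * x = y ^ 3 + a * y ^ 2 + b * y then (p : ℤ) - 1 else -1)
        = (p : ℤ) * (if x ^ 3 + a * x ^ 2 + b * x = y ^ 3 + a * y ^ 2 + b * y then (1:ℤ) else 0)
          - 1 := by
      intro x y; split <;> ring
    have hT : ∑ l : ZMod p,
        (∑ x : ZMod p, (quadraticChar (ZMod p) (x ^ 3 + a * x ^ 2 + b * x + l) : ℤ)) ^ 2
        = (p : ℤ) * ((1 + (quadraticChar (ZMod p) (-3) : ℤ)) * ((p : ℤ) - 1)) := by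
      rw [hsq,
        Finset.sum_congr rfl fun x _ => Finset.sum_congr rfl fun y _ => (hL2 x y).trans
          (hsplit x y)]
      simp only [Finset.sum_sub_distrib, ← Finset.mul_sum, Finset.sum_const,
        Finset.card_univ, ZMod.card, nsmul_eq_mul, mul_one]
      rw [Ncount hp a b hab]
      ring
    rw [hT]
    have hp0 : (p : ℚ) ≠ 0 := by
      exact_mod_cast Nat.Prime.ne_zero (Fact.out)
    push_cast
    field_simp
end

section
/- Let p > 3 be prime and d ∈ F_p nonzero. Given any family of polynomials f_λ over F_p indexed by λ ∈ F_p, the point-count families N_λ = #{(x,y) : y² = f_λ(x)} and N'_λ = #{(x,y) : d y² = f_λ(x)} have equal variance: E(N²) − E(N)² = E(N'²) − E(N')². -/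
open Finset

private lemma card_sq_eq {p : ℕ} [Fact p.Prime] (hp : 3 < p) (a : ZMod p) :
    ((univ.filter fun y : ZMod p => y ^ 2 = a).card : ℤ)
      = quadraticChar (ZMod p) a + 1 := by
  have hchar : ringChar (ZMod p) ≠ 2 := by
    rw [ZMod.ringChar_zmod_n]; omega
  have := quadraticChar_card_sqrts hchar a
  rw [← this]
  congr 1
  rw [Set.toFinset_setOf]

private lemma var_affine {p : ℕ} [Fact p.Prime] (hp : 3 < p) (c ε : ℚ) (hε : ε ^ 2 = 1)
    (g : ZMod p → ℚ) :
    ((∑ l : ZMod p, (c + ε * g l) ^ 2) / p) - ((∑ l : ZMod p, (c + ε * g l)) / p) ^ 2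
      = ((∑ l : ZMod p, (g l) ^ 2) / p) - ((∑ l : ZMod p, g l) / p) ^ 2 := by
  have hp0 : (p : ℚ) ≠ 0 := by
    exact_mod_cast (Nat.Prime.ne_zero Fact.out : p ≠ 0)
  have hcard : ((Finset.univ : Finset (ZMod p)).card : ℚ) = p := by
    simp [ZMod.card]
  have h1 : (∑ l : ZMod p, (c + ε * g l) ^ 2)
      = p * c ^ 2 + 2 * c * ε * (∑ l : ZMod p, g l) + ε ^ 2 * (∑ l : ZMod p, (g l) ^ 2) := by
    rw [← hcard]
    simp [add_sq, Finset.sum_add_distrib, Finset.mul_sum, mul_pow]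
    exact Finset.sum_congr rfl fun x _ => by ring
  have h2 : (∑ l : ZMod p, (c + ε * g l))
      = p * c + ε * (∑ l : ZMod p, g l) := by
    rw [← hcard]
    simp [Finset.sum_add_distrib, Finset.mul_sum]
  rcases sq_eq_one_iff.mp hε with h | h <;>
    subst h <;> rw [h1, h2] <;> field_simp <;> ring

theorem stmt13 (p : ℕ) [Fact p.Prime] (hp : 3 < p) (d : ZMod p) (hd : d ≠ 0)
    (f : ZMod p → ZMod p → ZMod p) :
    ((((∑ l : ZMod p,
        ((Finset.univ.filter fun xy : ZMod p × ZMod p => xy.2 ^ 2 = f l xy.1).card : ℚ) ^ 2)) / p) -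
      (((∑ l : ZMod p,
        ((Finset.univ.filter fun xy : ZMod p × ZMod p => xy.2 ^ 2 = f l xy.1).card : ℚ))) / p) ^ 2)
    = ((((∑ l : ZMod p,
        ((Finset.univ.filter fun xy : ZMod p × ZMod p => d * xy.2 ^ 2 = f l xy.1).card : ℚ) ^ 2)) / p) -
      (((∑ l : ZMod p,
        ((Finset.univ.filter fun xy : ZMod p × ZMod p => d * xy.2 ^ 2 = f l xy.1).card : ℚ))) / p) ^ 2) := by
  set χ : ZMod p → ℤ := fun a => quadraticChar (ZMod p) a with hχ
  set S : ZMod p → ℤ := fun l => ∑ x : ZMod p, χ (f l x) with hS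
  set ε : ℤ := quadraticChar (ZMod p) d with hε
  have hε2 : ε ^ 2 = 1 := quadraticChar_sq_one hd
  have hεinv : (quadraticChar (ZMod p) d⁻¹ : ℤ) = ε := by
    have h1 : ε * quadraticChar (ZMod p) d⁻¹ = 1 := by
      rw [hε, ← map_mul, mul_inv_cancel₀ hd]
      exact map_one _
    rcases quadraticChar_dichotomy hd with h | h <;> rw [← hε] at h <;> rw [h] at h1 ⊢ <;> omega
  -- fiberwise card computation
  have hcardA : ∀ l : ZMod p,
      ((Finset.univ.filter fun xy : ZMod p × ZMod p => xy.2 ^ 2 = f l xy.1).card : ℤ)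
        = p + S l := by
    intro l
    have : ((Finset.univ.filter fun xy : ZMod p × ZMod p => xy.2 ^ 2 = f l xy.1).card : ℤ)
        = ∑ x : ZMod p, ((univ.filter fun y : ZMod p => y ^ 2 = f l x).card : ℤ) := by
      rw [Finset.card_filter]
      push_cast
      rw [Fintype.sum_prod_type]
      congr 1
      ext x
      rw [Finset.card_filter]
      push_cast
      rfl
    rw [this]
    have : ∀ x : ZMod p, ((univ.filter fun y : ZMod p => y ^ 2 = f l x).card : ℤ)
        = χ (f l x) + 1 := fun x => card_sq_eq hp (f l x)
    simp only [this, Finset.sum_add_distrib, Finset.sum_const, Finset.card_univ, ZMod.card]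
    push_cast
    ring
  have hcardB : ∀ l : ZMod p,
      ((Finset.univ.filter fun xy : ZMod p × ZMod p => d * xy.2 ^ 2 = f l xy.1).card : ℤ)
        = p + ε * S l := by
    intro l
    have heq : ∀ x y : ZMod p, (d * y ^ 2 = f l x) ↔ (y ^ 2 = d⁻¹ * f l x) := by
      intro x y
      rw [eq_comm, mul_comm d, eq_comm (a := y ^2), ← div_eq_iff hd, div_eq_inv_mul, eq_comm]
    have : ((Finset.univ.filter fun xy : ZMod p × ZMod p => d * xy.2 ^ 2 = f l xy.1).card : ℤ)
        = ∑ x : ZMod p, ((univ.filter fun y : ZMod p => y ^ 2 = d⁻¹ * f l x).card : ℤ) := by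
      rw [Finset.card_filter]
      push_cast
      rw [Fintype.sum_prod_type]
      congr 1
      ext x
      rw [Finset.card_filter]
      push_cast
      refine Finset.sum_congr rfl fun y _ => ?_
      simp [heq x y]
    rw [this]
    have hterm : ∀ x : ZMod p, ((univ.filter fun y : ZMod p => y ^ 2 = d⁻¹ * f l x).card : ℤ)
        = ε * χ (f l x) + 1 := by
      intro x
      rw [card_sq_eq hp (d⁻¹ * f l x)]
      have : (quadraticChar (ZMod p) (d⁻¹ * f l x) : ℤ) = ε * χ (f l x) := by
        rw [map_mul]
        push_cast
        rw [hεinv]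
      rw [this]
    simp only [hterm, Finset.sum_add_distrib, Finset.sum_const, Finset.card_univ, ZMod.card,
      ← Finset.mul_sum]
    push_cast
    ring
  have keyA : ∀ l : ZMod p,
      ((Finset.univ.filter fun xy : ZMod p × ZMod p => xy.2 ^ 2 = f l xy.1).card : ℚ)
        = (p : ℚ) + (1 : ℚ) * ((S l : ℤ) : ℚ) := by
    intro l
    have := hcardA l
    have : (((Finset.univ.filter fun xy : ZMod p × ZMod p => xy.2 ^ 2 = f l xy.1).card : ℤ) : ℚ)
        = ((p + S l : ℤ) : ℚ) := by exact_mod_cast congrArg (Int.cast : ℤ → ℚ) this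
    push_cast at this ⊢
    linarith
  have keyB : ∀ l : ZMod p,
      ((Finset.univ.filter fun xy : ZMod p × ZMod p => d * xy.2 ^ 2 = f l xy.1).card : ℚ)
        = (p : ℚ) + ((ε : ℤ) : ℚ) * ((S l : ℤ) : ℚ) := by
    intro l
    have := hcardB l
    have : (((Finset.univ.filter fun xy : ZMod p × ZMod p => d * xy.2 ^ 2 = f l xy.1).card : ℤ) : ℚ)
        = ((p + ε * S l : ℤ) : ℚ) := by exact_mod_cast congrArg (Int.cast : ℤ → ℚ) this
    push_cast at this ⊢
    linarith
  simp only [keyA, keyB]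
  rw [var_affine hp (p : ℚ) 1 (by norm_num) (fun l => ((S l : ℤ) : ℚ)),
    var_affine hp (p : ℚ) ((ε : ℤ) : ℚ) (by exact_mod_cast congrArg (Int.cast : ℤ → ℚ) hε2)
      (fun l => ((S l : ℤ) : ℚ))]
end

section
/- Let p > 3 be prime with p ≡ 2 (mod 3) and c ∈ F_p nonzero. For S_λ = Σ_{x ∈ F_p} σ(x³ + λ x + c), the variance of (S_λ)_{λ∈F_p} equals p − 2 − σ(−1). -/
/-!
For `x ≠ 0` write `x³ + λx + c = x (λ + a x)` with `a x = (x³ + c) / x`, so that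
`S_λ = σ(c) + T_λ` where `T_λ = ∑ₓ σ(x) σ(λ + a x)`. Summing over `λ` kills `T_λ`, so the
variance is `(1/p) ∑_λ T_λ²`, and the classical evaluation `∑_λ σ((λ + a)(λ + b)) = p [a = b] - 1`
turns this into `∑ σ(xy)` over the pairs with `a x = a y`, i.e. `x = y` or `xy(x + y) = c`.
The diagonal gives `p - 1`; since cubing is a bijection when `p ≡ 2 (mod 3)`, the two conditions
overlap in exactly one pair. Finally, putting `s = x + y`, the pairs with `xy(x + y) = c` are
counted by the roots of `X² - sX + c/s`, which turns their contribution into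
`σ(c) ∑ₛ σ(s³ - 4c) - σ(-1) = -σ(-1)`, cubing again being a bijection.
-/

open Finset

section
variable {F : Type*} [Field F] [Fintype F]

theorem FiniteField.bijective_pow_three (h : Fintype.card F % 3 = 2) :
    Function.Bijective fun x : F => x ^ 3 := by
  set q := Fintype.card F
  have hexp : 3 * ((2 * q - 1) / 3) = q + (q - 1) := by omega
  have hinv : ∀ x : F, (x ^ 3) ^ ((2 * q - 1) / 3) = x := by
    intro x
    rw [← pow_mul, hexp, pow_add, FiniteField.pow_card]
    rcases eq_or_ne x 0 with rfl | hx
    · simp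
    · rw [FiniteField.pow_card_sub_one_eq_one x hx, mul_one]
  exact Finite.injective_iff_bijective.mp fun x y hxy => by
    rw [← hinv x, ← hinv y]; exact congrArg (· ^ _) hxy

variable [DecidableEq F]

local notation "χ" => quadraticChar F

theorem quadraticChar_mul_self_of_ne_zero {x : F} (hx : x ≠ 0) : χ (x * x) = 1 := by
  rw [← sq, quadraticChar_sq_one' hx]

theorem sum_quadraticChar_mul_self : ∑ x : F, χ (x * x) = Fintype.card F - 1 := by
  have h (x : F) : χ (x * x) = 1 - if x = 0 then 1 else 0 := by
    rcases eq_or_ne x 0 with rfl | hx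
    · simp
    · rw [quadraticChar_mul_self_of_ne_zero hx, if_neg hx, sub_zero]
  simp [h, sum_sub_distrib]

theorem sum_quadraticChar_cubic_eq (l c : F) :
    ∑ x : F, χ (x ^ 3 + l * x + c) = χ c + ∑ x : F, χ x * χ (l + (x ^ 3 + c) / x) := by
  have h (x : F) :
      χ (x ^ 3 + l * x + c) = χ x * χ (l + (x ^ 3 + c) / x) + if x = 0 then χ c else 0 := by
    rcases eq_or_ne x 0 with rfl | hx
    · simp
    · rw [if_neg hx, add_zero, ← map_mul]
      congr 1
      field_simp
      ring
  rw [sum_congr rfl fun x _ => h x, sum_add_distrib, sum_ite_eq', if_pos (mem_univ _), add_comm]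

variable (hF : ringChar F ≠ 2)
include hF

theorem sum_quadraticChar_add_right (b : F) : ∑ x : F, χ (x + b) = 0 :=
  (Fintype.sum_equiv (Equiv.addRight b) _ χ fun _ => rfl).trans (quadraticChar_sum_zero hF)

theorem sum_quadraticChar_mul_add_self {d : F} (hd : d ≠ 0) :
    ∑ x : F, χ (x * (x + d)) = -1 := by
  have h (x : F) : χ (x * (x + d)) = χ (1 + d * x⁻¹) - if x = 0 then 1 else 0 := by
    rcases eq_or_ne x 0 with rfl | hx
    · simp
    · rw [if_neg hx, sub_zero, show x * (x + d) = (1 + d * x⁻¹) * (x * x) by field_simp,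
        map_mul, quadraticChar_mul_self_of_ne_zero hx, mul_one]
  -- `x ↦ 1 + d x⁻¹` permutes `F` (with `0⁻¹ = 0`)
  have hbij : Function.Bijective fun x : F => 1 + d * x⁻¹ :=
    (Equiv.addLeft 1).bijective.comp ((Equiv.mulLeft₀ d hd).bijective.comp inv_involutive.bijective)
  simp only [h, sum_sub_distrib, sum_ite_eq', mem_univ, if_true]
  rw [Fintype.sum_bijective _ hbij _ χ fun _ => rfl, quadraticChar_sum_zero hF, zero_sub]

theorem sum_quadraticChar_add_mul_add (a b : F) :
    ∑ x : F, χ ((x + a) * (x + b)) = if a = b then (Fintype.card F : ℤ) - 1 else -1 := by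
  rw [Fintype.sum_equiv (Equiv.addRight a) _ (fun x => χ (x * (x + (b - a)))) fun x => by
    simp only [Equiv.coe_addRight]; ring_nf]
  split_ifs with hab
  · simp only [hab, sub_self, add_zero, sum_quadraticChar_mul_self]
  · exact sum_quadraticChar_mul_add_self hF (sub_ne_zero.mpr (Ne.symm hab))

theorem sum_sum_quadraticChar_mul_add (a : F → F) :
    ∑ l : F, ∑ x : F, χ x * χ (l + a x) = 0 := by
  rw [sum_comm]
  simp only [← mul_sum, sum_quadraticChar_add_right hF, mul_zero, sum_const_zero]

theorem sum_sq_sum_quadraticChar_mul_add (a : F → F) :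
    ∑ l : F, (∑ x : F, χ x * χ (l + a x)) ^ 2 =
      Fintype.card F * ∑ x : F, ∑ y : F, if a x = a y then χ (x * y) else 0 := by
  have hterm (x y : F) : ∑ l : F, χ x * χ (l + a x) * (χ y * χ (l + a y)) =
      Fintype.card F * (if a x = a y then χ (x * y) else 0) - χ x * χ y := by
    have hl (l : F) : χ x * χ (l + a x) * (χ y * χ (l + a y)) =
        χ (x * y) * χ ((l + a x) * (l + a y)) := by
      simp only [map_mul]; ring
    rw [sum_congr rfl fun l _ => hl l, ← mul_sum, sum_quadraticChar_add_mul_add hF, map_mul]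
    split_ifs <;> ring
  calc ∑ l : F, (∑ x : F, χ x * χ (l + a x)) ^ 2
      = ∑ x : F, ∑ y : F, ∑ l : F, χ x * χ (l + a x) * (χ y * χ (l + a y)) := by
        simp_rw [sq, sum_mul_sum]
        rw [sum_comm]
        exact sum_congr rfl fun x _ => sum_comm
    _ = Fintype.card F * (∑ x : F, ∑ y : F, if a x = a y then χ (x * y) else 0) -
          (∑ x : F, χ x) * ∑ y : F, χ y := by
        simp only [hterm, sum_sub_distrib, ← mul_sum, sum_mul_sum]
    _ = _ := by rw [quadraticChar_sum_zero hF, mul_zero, sub_zero]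

theorem card_filter_mul_sub_eq (s t : F) :
    (#{x : F | x * (s - x) = t} : ℤ) = χ (s ^ 2 - 4 * t) + 1 := by
  have h2 : (2 : F) ≠ 0 := Ring.two_ne_zero hF
  rw [← quadraticChar_card_sqrts hF]
  congr 1
  refine card_equiv ((Equiv.mulLeft₀ 2 h2).trans (Equiv.subRight s)) fun x => ?_
  have h4 : (4 : F) ≠ 0 := by simpa [show (4 : F) = 2 * 2 by norm_num] using h2
  simp only [mem_filter_univ, Set.mem_toFinset, Set.mem_ofPred_eq]
  change x * (s - x) = t ↔ (2 * x - s) ^ 2 = s ^ 2 - 4 * t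
  constructor
  · intro h; linear_combination (-4 : F) * h
  · intro h
    exact mul_left_cancel₀ h4 (by linear_combination -h)

theorem sum_ite_mul_sub_mul_eq {s : F} (hs : s ≠ 0) (c : F) :
    ∑ x : F, (if x * (s - x) * s = c then χ (x * (s - x)) else 0) =
      χ (c * s) + χ (c * (s ^ 3 - 4 * c)) := by
  have hcond (x : F) : x * (s - x) * s = c ↔ x * (s - x) = c / s := (eq_div_iff hs).symm
  have hval : χ (c / s) = χ (c * s) := by
    rw [show c / s = c * s * (s⁻¹ * s⁻¹) by field_simp, map_mul,
      quadraticChar_mul_self_of_ne_zero (inv_ne_zero hs), mul_one]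
  calc ∑ x : F, (if x * (s - x) * s = c then χ (x * (s - x)) else 0)
      = ∑ x : F, (if x * (s - x) = c / s then χ (c / s) else 0) :=
        sum_congr rfl fun x _ => by
          simp only [hcond]
          split_ifs with h
          · rw [h]
          · rfl
    _ = χ (c / s) * (χ (s ^ 2 - 4 * (c / s)) + 1) := by
        rw [← sum_filter, sum_const, nsmul_eq_mul, card_filter_mul_sub_eq hF, mul_comm]
    _ = χ (c * s) + χ (c * (s ^ 3 - 4 * c)) := by
        rw [hval, mul_add, mul_one, add_comm, ← map_mul]
        congr 2
        field_simp

theorem sum_quadraticChar_pow_three_sub (hcube : Function.Bijective fun x : F => x ^ 3) (b : F) :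
    ∑ x : F, χ (x ^ 3 - b) = 0 := by
  rw [Fintype.sum_bijective _ hcube _ (fun u => χ (u - b)) fun _ => rfl]
  simpa only [sub_eq_add_neg] using sum_quadraticChar_add_right hF (-b)

theorem sum_sum_ite_mul_mul_add_eq (hcube : Function.Bijective fun x : F => x ^ 3) {c : F}
    (hc : c ≠ 0) :
    ∑ x : F, ∑ y : F, (if x * y * (x + y) = c then χ (x * y) else 0) = -χ (-1) := by
  have h2c : 2 * c ≠ 0 := mul_ne_zero (Ring.two_ne_zero hF) hc
  calc ∑ x : F, ∑ y : F, (if x * y * (x + y) = c then χ (x * y) else 0)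
      = ∑ x : F, ∑ s : F, (if x * (s - x) * s = c then χ (x * (s - x)) else 0) :=
        sum_congr rfl fun x _ => (Fintype.sum_equiv (Equiv.subRight x) _ _ fun s => by
          simp only [Equiv.subRight_apply, add_sub_cancel]).symm
    _ = ∑ s : F, ∑ x : F, (if x * (s - x) * s = c then χ (x * (s - x)) else 0) := sum_comm
    _ = ∑ s ∈ univ.erase 0, ∑ x : F, (if x * (s - x) * s = c then χ (x * (s - x)) else 0) := by
        refine (sum_erase univ ?_).symm
        exact sum_eq_zero fun x _ => if_neg (by simpa using hc.symm)
    _ = ∑ s ∈ univ.erase 0, (χ (c * s) + χ (c * (s ^ 3 - 4 * c))) :=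
        sum_congr rfl fun s hs => sum_ite_mul_sub_mul_eq hF (ne_of_mem_erase hs) c
    _ = -χ (-1) := by
        rw [sum_add_distrib, sum_erase_eq_sub (mem_univ 0), sum_erase_eq_sub (mem_univ 0),
          show c * (0 ^ 3 - 4 * c) = -1 * (2 * c * (2 * c)) by ring, map_mul χ (-1),
          quadraticChar_mul_self_of_ne_zero (mul_ne_zero (Ring.two_ne_zero hF) hc)]
        simp only [map_mul χ c, ← mul_sum, quadraticChar_sum_zero hF,
          sum_quadraticChar_pow_three_sub hF hcube, mul_zero, MulChar.map_zero]
        ring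

theorem sum_sum_ite_div_eq_div (hcube : Function.Bijective fun x : F => x ^ 3) {c : F}
    (hc : c ≠ 0) :
    ∑ x : F, ∑ y : F, (if (x ^ 3 + c) / x = (y ^ 3 + c) / y then χ (x * y) else 0) =
      Fintype.card F - 2 - χ (-1) := by
  have hsplit (x y : F) : (if (x ^ 3 + c) / x = (y ^ 3 + c) / y then χ (x * y) else 0) =
      (if x = y then χ (x * y) else 0) + (if x * y * (x + y) = c then χ (x * y) else 0) -
        if x = y then (if x * y * (x + y) = c then χ (x * y) else 0) else 0 := by
    rcases eq_or_ne x 0 with rfl | hx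
    · simp
    rcases eq_or_ne y 0 with rfl | hy
    · simp
    have hiff : (x ^ 3 + c) / x = (y ^ 3 + c) / y ↔ x = y ∨ x * y * (x + y) = c := by
      rw [div_eq_div_iff hx hy, ← sub_eq_zero,
        show (x ^ 3 + c) * y - (y ^ 3 + c) * x = (x - y) * (x * y * (x + y) - c) by ring,
        mul_eq_zero, sub_eq_zero, sub_eq_zero]
    by_cases h1 : x = y <;> by_cases h2 : x * y * (x + y) = c <;> simp [hiff, h1, h2]
  obtain ⟨x₀, hx₀⟩ := hcube.surjective (c / 2)
  replace hx₀ : x₀ ^ 3 = c / 2 := hx₀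
  have hdiag (x : F) : x * x * (x + x) = c ↔ x = x₀ := by
    refine Iff.trans ?_ (hcube.injective.eq_iff (a := x) (b := x₀))
    rw [hx₀, eq_div_iff (Ring.two_ne_zero hF)]
    constructor <;> intro h <;> linear_combination h
  have hx₀ : x₀ ≠ 0 := by
    rintro rfl
    exact hc (by simpa using ((hdiag 0).mpr rfl).symm)
  simp only [hsplit, sum_add_distrib, sum_sub_distrib, sum_ite_eq, mem_univ, if_true,
    sum_quadraticChar_mul_self, sum_sum_ite_mul_mul_add_eq hF hcube hc, hdiag, sum_ite_eq',
    quadraticChar_mul_self_of_ne_zero hx₀]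
  ring

theorem sum_sum_quadraticChar_cubic (c : F) :
    ∑ l : F, ∑ x : F, χ (x ^ 3 + l * x + c) = Fintype.card F * χ c := by
  simp only [sum_quadraticChar_cubic_eq, sum_add_distrib, sum_sum_quadraticChar_mul_add hF,
    sum_const, card_univ, nsmul_eq_mul, add_zero]

theorem sum_sq_sum_quadraticChar_cubic (hcube : Function.Bijective fun x : F => x ^ 3) {c : F}
    (hc : c ≠ 0) :
    ∑ l : F, (∑ x : F, χ (x ^ 3 + l * x + c)) ^ 2 =
      Fintype.card F * (Fintype.card F - 1 - χ (-1)) := by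
  simp only [sum_quadraticChar_cubic_eq, add_sq, sum_add_distrib, sum_const, card_univ,
    nsmul_eq_mul, ← mul_sum, sum_sum_quadraticChar_mul_add hF, sum_sq_sum_quadraticChar_mul_add hF,
    sum_sum_ite_div_eq_div hF hcube hc, quadraticChar_sq_one hc]
  ring

end

theorem stmt16 (p : ℕ) [Fact p.Prime] (hp : 3 < p) (hp3 : p % 3 = 2)
    (c : ZMod p) (hc : c ≠ 0) :
    ((((∑ l : ZMod p, (∑ x : ZMod p, quadraticChar (ZMod p) (x ^ 3 + l * x + c)) ^ 2) : ℤ) : ℚ) / p) -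
      ((((∑ l : ZMod p, ∑ x : ZMod p, quadraticChar (ZMod p) (x ^ 3 + l * x + c)) : ℤ) : ℚ) / p) ^ 2
      = p - 2 - quadraticChar (ZMod p) (-1) := by
  have hF : ringChar (ZMod p) ≠ 2 := by
    rw [ZMod.ringChar_zmod_n]
    omega
  have hcube := FiniteField.bijective_pow_three (F := ZMod p) (by rwa [ZMod.card])
  have hχc : ((quadraticChar (ZMod p) c : ℤ) : ℚ) ^ 2 = 1 := by
    exact_mod_cast quadraticChar_sq_one hc
  have hp0 : (p : ℚ) ≠ 0 := Nat.cast_ne_zero.mpr (by omega)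
  rw [sum_sum_quadraticChar_cubic hF, sum_sq_sum_quadraticChar_cubic hF hcube hc, ZMod.card]
  push_cast
  field_simp
  linear_combination -hχc
end
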